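/- Let σ be a profile over rankings of M alternatives with top-choice shares w^σ, and write σ = Σ_{j=1}^M w^σ_j σ_j, where σ_j is the conditional profile of σ on the set of rankings placing y_j first (defined whenever w^σ_j > 0). Fix k and let τ be an arbitrary profile (the manipulation of group k), and let σ' := Σ_{j ≠ k} w^σ_j σ_j + w^σ_k τ. Then the manipulated policy satisfies Φ*(σ')(y_k) ≤ (w^σ_k + 1)/2. In other words, Φ* satisfies population-bounded manipulability with γ(w) = (w + 1)/2. -/

import Mathlib

/-!
Outside group `k` nothing changes, so in `σ'` each `y_j` with `j ≠ k` is still ranked first by a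
mass `w_j` of voters, which gives `u_j(σ') ≥ w_j`. Hence `Σ_j u_j(σ') ≥ u_k(σ') + (1 - w_k)`, and
since `u_k(σ') ≤ 1`,
`Φ*(σ')(y_k) ≤ u_k / (u_k + 1 - w_k) ≤ 1 / (2 - w_k) ≤ (1 + w_k) / 2`.
-/

open Finset

noncomputable section

/-- A profile: a probability distribution over rankings (permutations of `Fin M`,
where `r i` is the 0-indexed position of alternative `i`, smaller is better). -/
def IsProfile (M : ℕ) (σ : Equiv.Perm (Fin M) → ℝ) : Prop :=
  (∀ r, 0 ≤ σ r) ∧ ∑ r : Equiv.Perm (Fin M), σ r = 1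

/-- Induced preference function `P^σ(y_i ≻ y_j)`. -/
def Pref (M : ℕ) (σ : Equiv.Perm (Fin M) → ℝ) (i j : Fin M) : ℝ :=
  ∑ r : Equiv.Perm (Fin M), σ r * (if r i < r j then (1 : ℝ) else 0)

/-- Top-choice share `w^σ_i`. -/
def topShare (M : ℕ) (σ : Equiv.Perm (Fin M) → ℝ) (i : Fin M) : ℝ :=
  ∑ r : Equiv.Perm (Fin M), (if (r i : ℕ) = 0 then σ r else 0)

/-- Borda score `B(y_i) = Σ_r σ_r (M − r(y_i))` (with 1-indexed ranks; here ranks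
are 0-indexed, so the weight is `M − 1 − r i`). -/
def Borda (M : ℕ) (σ : Equiv.Perm (Fin M) → ℝ) (i : Fin M) : ℝ :=
  ∑ r : Equiv.Perm (Fin M), σ r * ((M : ℝ) - 1 - ((r i : ℕ) : ℝ))

/-- `u_i := min_{j ≠ i} P^σ(y_i ≻ y_j)`. -/
def minPref (M : ℕ) (σ : Equiv.Perm (Fin M) → ℝ) (i : Fin M) : ℝ :=
  sInf {x : ℝ | ∃ j, j ≠ i ∧ x = Pref M σ i j}

/-- The policy `Φ*(σ)(y_i) := u_i / Σ_j u_j`. -/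
def PhiStar (M : ℕ) (σ : Equiv.Perm (Fin M) → ℝ) (i : Fin M) : ℝ :=
  minPref M σ i / ∑ j : Fin M, minPref M σ j

section Profile

variable {M : ℕ} {σ ρ : Equiv.Perm (Fin M) → ℝ}

theorem topShare_nonneg (hσ : ∀ r, 0 ≤ σ r) (i : Fin M) : 0 ≤ topShare M σ i :=
  Finset.sum_nonneg fun r _ => by split_ifs <;> simp [hσ r]

/-- Every ranking has exactly one alternative in first place. -/
theorem sum_topShare [NeZero M] (σ : Equiv.Perm (Fin M) → ℝ) :
    ∑ i, topShare M σ i = ∑ r, σ r := by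
  unfold topShare
  rw [Finset.sum_comm]
  refine Finset.sum_congr rfl fun r _ => ?_
  rw [Equiv.sum_comp r fun a : Fin M => if (a : ℕ) = 0 then σ r else 0]
  simp [Fin.val_eq_zero_iff]

theorem Pref_nonneg (hσ : ∀ r, 0 ≤ σ r) (i j : Fin M) : 0 ≤ Pref M σ i j :=
  Finset.sum_nonneg fun r _ => mul_nonneg (hσ r) (by split_ifs <;> norm_num)

theorem Pref_le_one (hσ : IsProfile M σ) (i j : Fin M) : Pref M σ i j ≤ 1 := by
  rw [← hσ.2]
  refine Finset.sum_le_sum fun r _ => ?_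
  exact mul_le_of_le_one_right (hσ.1 r) (by split_ifs <;> norm_num)

theorem Pref_mono (h : ∀ r, σ r ≤ ρ r) (i j : Fin M) : Pref M σ i j ≤ Pref M ρ i j :=
  Finset.sum_le_sum fun r _ => mul_le_mul_of_nonneg_right (h r) (by split_ifs <;> norm_num)

theorem Pref_const_mul (c : ℝ) (i j : Fin M) :
    Pref M (fun r => c * σ r) i j = c * Pref M σ i j := by
  simp only [Pref, Finset.mul_sum, mul_assoc]

theorem Pref_eq_one_of_top (hσ : IsProfile M σ) {i : Fin M}
    (htop : ∀ r, σ r ≠ 0 → (r i : ℕ) = 0) {j : Fin M} (hji : j ≠ i) : Pref M σ i j = 1 := by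
  rw [← hσ.2]
  refine Finset.sum_congr rfl fun r _ => ?_
  by_cases hr : σ r = 0
  · simp [hr]
  · have hlt : r i < r j := by
      have hi0 := htop r hr
      have hji' : r j ≠ r i := r.injective.ne hji
      rw [Fin.lt_def]; omega
    simp [hlt]

theorem minPref_nonneg (hσ : ∀ r, 0 ≤ σ r) (i : Fin M) : 0 ≤ minPref M σ i :=
  Real.sInf_nonneg <| by rintro x ⟨j, -, rfl⟩; exact Pref_nonneg hσ i j

theorem minPref_le_one (hσ : IsProfile M σ) (i : Fin M) : minPref M σ i ≤ 1 := by
  rcases Set.eq_empty_or_nonempty {x : ℝ | ∃ j, j ≠ i ∧ x = Pref M σ i j} with h | ⟨_, j, hji, rfl⟩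
  · rw [minPref, h, Real.sInf_empty]; exact zero_le_one
  · have hbdd : BddBelow {x : ℝ | ∃ j, j ≠ i ∧ x = Pref M σ i j} := by
      refine ⟨0, ?_⟩
      rintro x ⟨l, -, rfl⟩
      exact Pref_nonneg hσ.1 i l
    exact (csInf_le hbdd ⟨j, hji, rfl⟩).trans (Pref_le_one hσ i j)

theorem le_minPref {a : ℝ} {i j : Fin M} (hji : j ≠ i) (h : ∀ l, l ≠ i → a ≤ Pref M σ i l) :
    a ≤ minPref M σ i :=
  le_csInf ⟨_, j, hji, rfl⟩ <| by rintro x ⟨l, hl, rfl⟩; exact h l hl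

theorem isProfile_mixture {ι : Type*} [Fintype ι] {w : ι → ℝ} {ρ : ι → Equiv.Perm (Fin M) → ℝ}
    (hw : ∀ j, 0 ≤ w j) (hw1 : ∑ j, w j = 1) (hρ : ∀ j, IsProfile M (ρ j)) :
    IsProfile M fun r => ∑ j, w j * ρ j r := by
  refine ⟨fun r => Finset.sum_nonneg fun j _ => mul_nonneg (hw j) ((hρ j).1 r), ?_⟩
  rw [Finset.sum_comm]
  simp [← Finset.mul_sum, (hρ _).2, hw1]

theorem le_minPref_of_const_mul_le (hρ : IsProfile M ρ) {i : Fin M}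
    (htop : ∀ r, ρ r ≠ 0 → (r i : ℕ) = 0) {c : ℝ} (hc : ∀ r, c * ρ r ≤ σ r) {j : Fin M}
    (hji : j ≠ i) : c ≤ minPref M σ i :=
  le_minPref hji fun l hli => calc
    c = c * Pref M ρ i l := by rw [Pref_eq_one_of_top hρ htop hli, mul_one]
    _ = Pref M (fun r => c * ρ r) i l := (Pref_const_mul c i l).symm
    _ ≤ Pref M σ i l := Pref_mono hc i l

end Profile

theorem div_le_add_one_div_two {u w D : ℝ} (hu0 : 0 ≤ u) (hu1 : u ≤ 1) (hw0 : 0 ≤ w)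
    (hw1 : w ≤ 1) (hD : u + (1 - w) ≤ D) : u / D ≤ (w + 1) / 2 := by
  rcases (show 0 ≤ D by linarith).eq_or_lt with rfl | hDpos
  · rw [div_zero]; linarith
  rw [div_le_div_iff₀ hDpos two_pos]
  -- `(w + 1) D - 2 u ≥ (w + 1)(u + 1 - w) - 2 u = (1 - w)(1 + w - u)`
  nlinarith [mul_nonneg (sub_nonneg.2 hw1) (show 0 ≤ 1 + w - u by linarith)]

theorem phiStar_population_bounded_manipulability_general
    (M : ℕ) (σ : Equiv.Perm (Fin M) → ℝ) (hσ : IsProfile M σ)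
    (σg : Fin M → Equiv.Perm (Fin M) → ℝ)
    (hσg : ∀ j, IsProfile M (σg j))
    (hsupp : ∀ j r, σg j r ≠ 0 → (r j : ℕ) = 0)
    (k : Fin M) (τ : Equiv.Perm (Fin M) → ℝ) (hτ : IsProfile M τ)
    (σ' : Equiv.Perm (Fin M) → ℝ)
    (hσ' : ∀ r, σ' r = (∑ j ∈ Finset.univ.erase k, topShare M σ j * σg j r)
        + topShare M σ k * τ r) :
    PhiStar M σ' k ≤ (topShare M σ k + 1) / 2 := by
  have : NeZero M := ⟨k.pos.ne'⟩
  set w := topShare M σ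
  have hw : ∀ j, 0 ≤ w j := topShare_nonneg hσ.1
  have hw1 : ∑ j, w j = 1 := (sum_topShare σ).trans hσ.2
  have hσ'_mixture : σ' = fun r => ∑ j, w j * Function.update σg k τ j r := by
    funext r
    rw [hσ' r, ← Finset.sum_erase_add _ _ (Finset.mem_univ k), Function.update_self]
    congr 1
    exact Finset.sum_congr rfl fun j hj => by rw [Function.update_of_ne (Finset.ne_of_mem_erase hj)]
  have hσ'_prof : IsProfile M σ' := hσ'_mixture ▸ isProfile_mixture hw hw1 fun j => by
    rcases eq_or_ne j k with rfl | hjk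
    · simpa using hτ
    · simpa [hjk] using hσg j
  have hdom : ∀ j ∈ Finset.univ.erase k, ∀ r, w j * σg j r ≤ σ' r := fun j hj r =>
    hσ' r ▸ le_add_of_le_of_nonneg
      (Finset.single_le_sum (f := fun l => w l * σg l r)
        (fun l _ => mul_nonneg (hw l) ((hσg l).1 r)) hj)
      (mul_nonneg (hw k) (hτ.1 r))
  have hu : ∀ j ∈ Finset.univ.erase k, w j ≤ minPref M σ' j := fun j hj =>
    le_minPref_of_const_mul_le (hσg j) (hsupp j) (hdom j hj) (Finset.ne_of_mem_erase hj).symm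
  have hD : minPref M σ' k + (1 - w k) ≤ ∑ j, minPref M σ' j := by
    have hw_split := Finset.sum_erase_add _ w (Finset.mem_univ k)
    have hu_split := Finset.sum_erase_add _ (minPref M σ') (Finset.mem_univ k)
    linarith [Finset.sum_le_sum hu]
  exact div_le_add_one_div_two (minPref_nonneg hσ'_prof.1 k) (minPref_le_one hσ'_prof k) (hw k)
    (hw1 ▸ Finset.single_le_sum (fun j _ => hw j) (Finset.mem_univ k)) hD

/-- population-bounded manipulability of `Φ*`: if group `k`
(of share `w^σ_k`) replaces its conditional sub-profile by an arbitrary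
profile `τ`, the manipulated policy satisfies
`Φ*(σ')(y_k) ≤ (w^σ_k + 1)/2`. -/
theorem phiStar_population_bounded_manipulability
    (M : ℕ) (hM : 2 ≤ M) (σ : Equiv.Perm (Fin M) → ℝ) (hσ : IsProfile M σ)
    (σg : Fin M → Equiv.Perm (Fin M) → ℝ)
    (hσg : ∀ j, IsProfile M (σg j))
    (hsupp : ∀ j r, σg j r ≠ 0 → (r j : ℕ) = 0)
    (hdec : ∀ r, σ r = ∑ j, topShare M σ j * σg j r)
    (k : Fin M) (τ : Equiv.Perm (Fin M) → ℝ) (hτ : IsProfile M τ)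
    (σ' : Equiv.Perm (Fin M) → ℝ)
    (hσ' : ∀ r, σ' r = (∑ j ∈ Finset.univ.erase k, topShare M σ j * σg j r)
        + topShare M σ k * τ r) :
    PhiStar M σ' k ≤ (topShare M σ k + 1) / 2 :=
  phiStar_population_bounded_manipulability_general M σ hσ σg hσg hsupp k τ hτ σ' hσ'
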